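/- Let k be a commutative ring, H a k-bialgebra that is finitely generated and projective as a k-module, A a k-algebra, and ρ : A → A⊗H a k-linear map making A a right lax H-comodule algebra (conditions (2.1.1), (2.2.1), (2.2.2), (2.5.1)). Define ⇀ : H^*×A → A by h^*⇀a = h^*(a_{[1]})a_{[0]}. Equip Hom_k(H,A) with the product (f•g)(h) = g(h_{(2)})_{[0]} f(h_{(1)} g(h_{(2)})_{[1]}), and equip A⊗H^* with the product (a⊗h^*)(b⊗g^*) = (h^*_{(2)}⇀b)a ⊗ (h^*_{(1)}*g^*) (the smash product A^op # H^{*cop}). Then the k-linear isomorphism α : A⊗H^* → Hom_k(H,A), α(a⊗h^*)(h) = a·h^*(h), is multiplicative: α(ξη) = α(ξ)•α(η) for all ξ,η ∈ A⊗H^*. -/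
import Mathlib


open TensorProduct

/-- The map `A ⊗ H → (A ⊗ H) ⊗ H`, `a ⊗ h ↦ (a ⊗ h⁽¹⁾) ⊗ h⁽²⁾`. -/
noncomputable def coassocMap (k A H : Type*) [CommRing k] [Ring A] [Algebra k A]
    [Ring H] [Bialgebra k H] :
    A ⊗[k] H →ₗ[k] (A ⊗[k] H) ⊗[k] H :=
  (TensorProduct.assoc k A H H).symm.toLinearMap ∘ₗ
    LinearMap.lTensor A (Coalgebra.comul (R := k) (A := H))

/-- The map `ε' : A ⊗ H → A`, `a ⊗ h ↦ ε(h) a`. -/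
noncomputable def counitMap (k A H : Type*) [CommRing k] [Ring A] [Algebra k A]
    [Ring H] [Bialgebra k H] :
    A ⊗[k] H →ₗ[k] A :=
  (TensorProduct.rid k A).toLinearMap ∘ₗ
    LinearMap.lTensor A (Coalgebra.counit (R := k) (A := H))

/-- The convolution product on `H* = Hom_k(H, k)`: `(f * g)(h) = Σ f(h⁽¹⁾) g(h⁽²⁾)`. -/
noncomputable def convMul (k H : Type*) [CommRing k] [Ring H] [Bialgebra k H]
    (f g : H →ₗ[k] k) : H →ₗ[k] k :=
  LinearMap.mul' k k ∘ₗ TensorProduct.map f g ∘ₗ Coalgebra.comul (R := k)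

/-- The action `φ ⇀ a = φ(a₍₁₎) a₍₀₎` of `H*` on `A` induced by `ρ : A → A ⊗ H`. -/
noncomputable def dualHit (k A H : Type*) [CommRing k] [Ring A] [Algebra k A]
    [Ring H] [Bialgebra k H] (ρ : A →ₗ[k] A ⊗[k] H) (φ : H →ₗ[k] k) : A →ₗ[k] A :=
  (TensorProduct.rid k A).toLinearMap ∘ₗ LinearMap.lTensor A φ ∘ₗ ρ

/-- The opposite Koppinen product `(f • g)(h) = Σ g(h⁽²⁾)₍₀₎ f(h⁽¹⁾ g(h⁽²⁾)₍₁₎)` on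
`Hom_k(H, A)`, for a measuring `ρ : A → A ⊗ H`. -/
noncomputable def kopMulOp (k A H : Type*) [CommRing k] [Ring A] [Algebra k A]
    [Ring H] [Bialgebra k H] (ρ : A →ₗ[k] A ⊗[k] H) (f g : H →ₗ[k] A) : H →ₗ[k] A :=
  LinearMap.mul' k A ∘ₗ
    LinearMap.lTensor A f ∘ₗ
    LinearMap.lTensor A (LinearMap.mul' k H) ∘ₗ
    (TensorProduct.assoc k A H H).toLinearMap ∘ₗ
    LinearMap.rTensor H (TensorProduct.comm k H A).toLinearMap ∘ₗ
    (TensorProduct.assoc k H A H).symm.toLinearMap ∘ₗ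
    LinearMap.lTensor H (ρ ∘ₗ g) ∘ₗ
    Coalgebra.comul (R := k)

set_option synthInstance.maxHeartbeats 1000000 in
set_option maxHeartbeats 2000000 in
/-- for a right lax `H`-comodule algebra `A` with `H` finitely generated
projective, the canonical isomorphism `α : Aᵒᵖ # H*ᶜᵒᵖ → Hom(H, A)`,
`α(a ⊗ φ)(h) = φ(h) a`, is multiplicative for the smash product
`(a ⊗ φ)(b ⊗ ψ) = (φ⁽²⁾ ⇀ b)a ⊗ (φ⁽¹⁾ * ψ)` and the Koppinen product
`(F • G)(h) = G(h⁽²⁾)₍₀₎ F(h⁽¹⁾ G(h⁽²⁾)₍₁₎)`; the Sweedler components `φ⁽¹⁾ ⊗ φ⁽²⁾` are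
expressed by quantifying over all finite decompositions `φ(xy) = Σ fᵢ(x) gᵢ(y)`. -/
theorem koppinen_smash_iso_multiplicative (k A H : Type*) [CommRing k] [Ring A]
    [Algebra k A] [Ring H] [Bialgebra k H] [Module.Finite k H] [Module.Projective k H]
    (ρ : A →ₗ[k] A ⊗[k] H)
    (h211 : ∀ a b : A, ρ (a * b) = ρ a * ρ b)
    (h221 : ∀ a : A, ρ.rTensor H (ρ a) = coassocMap k A H (ρ a) * (ρ 1 ⊗ₜ[k] (1 : H)))
    (h222 : ∀ a : A, counitMap k A H (ρ a) = counitMap k A H (ρ 1) * a)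
    (h251 : ρ 1 = (counitMap k A H).rTensor H (ρ.rTensor H (ρ 1))) :
    ∀ (a b : A) (φ ψ : H →ₗ[k] k) (n : ℕ) (f g : Fin n → (H →ₗ[k] k)),
      (∀ x y : H, φ (x * y) = ∑ i, f i x * g i y) →
      (∑ i, (convMul k H (f i) ψ).smulRight (dualHit k A H ρ (g i) b * a)) =
        kopMulOp k A H ρ (φ.smulRight a) (ψ.smulRight b) := by
  intro a b φ ψ n f g hφ
  ext h
  simp only [LinearMap.coe_sum, Finset.sum_apply, LinearMap.smulRight_apply,
    convMul, dualHit, kopMulOp, LinearMap.comp_apply]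
  generalize Coalgebra.comul (R := k) (A := H) h = c
  induction c using TensorProduct.induction_on with
  | zero => simp
  | add u v hu hv =>
      simp only [map_add, LinearMap.add_apply, smul_add, add_smul, Finset.sum_add_distrib,
        hu, hv]
  | tmul x y =>
      simp only [TensorProduct.map_tmul, LinearMap.lTensor_tmul, LinearMap.comp_apply,
        LinearMap.smulRight_apply, map_smul, LinearMap.mul'_apply]
      generalize ρ b = r
      induction r using TensorProduct.induction_on with
      | zero => simp
      | add u v hu hv =>
          simp only [map_add, LinearMap.add_apply, smul_add, add_smul,
            TensorProduct.tmul_add, Finset.sum_add_distrib, hu, hv, mul_add, add_mul]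
      | tmul p q =>
          simp only [LinearEquiv.coe_coe, TensorProduct.rid_tmul, TensorProduct.tmul_smul,
            TensorProduct.assoc_symm_tmul, LinearMap.rTensor_tmul, TensorProduct.comm_tmul,
            TensorProduct.assoc_tmul, LinearMap.lTensor_tmul, LinearMap.mul'_apply,
            LinearMap.smulRight_apply, map_smul, smul_smul, smul_mul_assoc]
          rw [← Finset.sum_smul, hφ, Finset.mul_sum]
          congr 1
          exact Finset.sum_congr rfl fun i _ => by ring
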